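/- arXiv:1602.03251 — 5 statements merged into one kernel-verified Lean document; each statement's English description precedes it below -/
import Mathlib

section
/- Let H, H^U be self-adjoint operators and A an operator such that, defining H_tot = H + H^U, the supports of A and H^U (in a tensor-product site structure) have graph distance at least l in the interaction graph of H = Σᵢ hᵢ. Then for all n ≤ l, ad_{H_tot}^n(A) = ad_H^n(A). -/
/-- `ActsOn M T` : the matrix `M` on `⨂_{s : σ} ℂ^{F s}` acts as the identity
outside the set `T` of sites. -/
def ActsOn {σ : Type*} {F : σ → Type*}
    (M : Matrix (∀ s, F s) (∀ s, F s) ℂ) (T : Finset σ) : Prop :=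
  (∀ x y, M x y ≠ 0 → ∀ s ∉ T, x s = y s) ∧
    (∀ x y x' y', (∀ s ∈ T, x s = x' s) → (∀ s ∈ T, y s = y' s) →
      (∀ s ∉ T, x s = y s) → (∀ s ∉ T, x' s = y' s) → M x y = M x' y')

section Lemmas
variable {σ : Type*} [Fintype σ] [DecidableEq σ] {F : σ → Type*}
  [∀ s, Fintype (F s)] [∀ s, DecidableEq (F s)]

lemma ActsOn.mono {M : Matrix (∀ s, F s) (∀ s, F s) ℂ} {S T : Finset σ}
    (hM : ActsOn M S) (hST : S ⊆ T) : ActsOn M T := by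
  obtain ⟨h1, h2⟩ := hM
  refine ⟨fun x y hxy s hs => h1 x y hxy s (fun hsS => hs (hST hsS)), ?_⟩
  intro x y x' y' hxx' hyy' hxy hx'y'
  by_cases hc : ∀ s ∉ S, x s = y s
  · have hc' : ∀ s ∉ S, x' s = y' s := by
      intro s hs
      by_cases hsT : s ∈ T
      · rw [← hxx' s hsT, ← hyy' s hsT]; exact hc s hs
      · exact hx'y' s hsT
    exact h2 x y x' y' (fun s hs => hxx' s (hST hs)) (fun s hs => hyy' s (hST hs)) hc hc'
  · push_neg at hc
    obtain ⟨s, hsS, hne⟩ := hc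
    have hsT : s ∈ T := by
      by_contra hsT
      exact hne (hxy s hsT)
    have hM0 : M x y = 0 := by
      by_contra h0; exact hne (h1 x y h0 s hsS)
    have hM0' : M x' y' = 0 := by
      by_contra h0
      exact hne (by rw [hxx' s hsT, hyy' s hsT]; exact h1 x' y' h0 s hsS)
    rw [hM0, hM0']

lemma ActsOn.zero (T : Finset σ) : ActsOn (0 : Matrix (∀ s, F s) (∀ s, F s) ℂ) T := by
  constructor
  · intro x y hxy; simp at hxy
  · intros; simp

lemma ActsOn.sub {M N : Matrix (∀ s, F s) (∀ s, F s) ℂ} {T : Finset σ}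
    (hM : ActsOn M T) (hN : ActsOn N T) : ActsOn (M - N) T := by
  constructor
  · intro x y hxy s hs
    by_contra hne
    have h1 : M x y = 0 := by by_contra h0; exact hne (hM.1 x y h0 s hs)
    have h2 : N x y = 0 := by by_contra h0; exact hne (hN.1 x y h0 s hs)
    rw [Matrix.sub_apply, h1, h2, sub_zero] at hxy
    exact hxy rfl
  · intro x y x' y' hxx' hyy' hxy hx'y'
    rw [Matrix.sub_apply, Matrix.sub_apply,
      hM.2 x y x' y' hxx' hyy' hxy hx'y', hN.2 x y x' y' hxx' hyy' hxy hx'y']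

lemma commute_of_disjoint {M N : Matrix (∀ s, F s) (∀ s, F s) ℂ} {S T : Finset σ}
    (hM : ActsOn M S) (hN : ActsOn N T) (hd : ∀ s, s ∈ S → s ∉ T) :
    M * N = N * M := by
  ext x y
  rw [Matrix.mul_apply, Matrix.mul_apply]
  by_cases hxy : ∀ s, s ∉ S → s ∉ T → x s = y s
  · set z : ∀ s, F s := fun s => if s ∈ S then y s else x s with hz
    set w : ∀ s, F s := fun s => if s ∈ T then y s else x s with hw
    have hzS : ∀ s ∈ S, z s = y s := fun s hs => by simp [hz, hs]
    have hzS' : ∀ s ∉ S, z s = x s := fun s hs => by simp [hz, hs]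
    have hwT : ∀ s ∈ T, w s = y s := fun s hs => by simp [hw, hs]
    have hwT' : ∀ s ∉ T, w s = x s := fun s hs => by simp [hw, hs]
    rw [Finset.sum_eq_single z (fun z' _ hne => ?_) (fun hz' => absurd (Finset.mem_univ z) hz'),
        Finset.sum_eq_single w (fun w' _ hne => ?_) (fun hw' => absurd (Finset.mem_univ w) hw')]
    · -- M x z * N z y = N x w * M w y
      have e1 : M x z = M w y := by
        apply hM.2
        · intro s hs
          rw [hwT' s (hd s hs)]
        · intro s hs; exact hzS s hs
        · intro s hs; exact (hzS' s hs).symm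
        · intro s hs
          by_cases hsT : s ∈ T
          · exact hwT s hsT
          · rw [hwT' s hsT]; exact hxy s hs hsT
      have e2 : N z y = N x w := by
        apply hN.2
        · intro s hs
          exact hzS' s (fun hsS => hd s hsS hs)
        · intro s hs; exact (hwT s hs).symm
        · intro s hs
          by_cases hsS : s ∈ S
          · exact hzS s hsS
          · rw [hzS' s hsS]; exact hxy s hsS hs
        · intro s hs; exact (hwT' s hs).symm
      rw [e1, e2, mul_comm]
    · -- w' ≠ w term for N*M vanishes
      by_contra h0
      have hNne := left_ne_zero_of_mul h0
      have hMne := right_ne_zero_of_mul h0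
      apply hne
      funext s
      by_cases hsT : s ∈ T
      · rw [hwT s hsT]
        exact hM.1 w' y hMne s (fun hsS => hd s hsS hsT)
      · rw [hwT' s hsT]
        exact (hN.1 x w' hNne s hsT).symm
    · -- z' ≠ z term for M*N vanishes
      by_contra h0
      have hMne := left_ne_zero_of_mul h0
      have hNne := right_ne_zero_of_mul h0
      apply hne
      funext s
      by_cases hsS : s ∈ S
      · rw [hzS s hsS]
        exact hN.1 z' y hNne s (fun hsT => hd s hsS hsT)
      · rw [hzS' s hsS]
        exact (hM.1 x z' hMne s hsS).symm
  · push_neg at hxy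
    obtain ⟨s, hsS, hsT, hne⟩ := hxy
    rw [Finset.sum_eq_zero, Finset.sum_eq_zero]
    · intro z' _
      by_contra h0
      exact hne ((hN.1 x z' (left_ne_zero_of_mul h0) s hsT).trans
        (hM.1 z' y (right_ne_zero_of_mul h0) s hsS))
    · intro z' _
      by_contra h0
      exact hne ((hM.1 x z' (left_ne_zero_of_mul h0) s hsS).trans
        (hN.1 z' y (right_ne_zero_of_mul h0) s hsT))

lemma ActsOn.mul {M N : Matrix (∀ s, F s) (∀ s, F s) ℂ} {S T : Finset σ}
    (hM : ActsOn M S) (hN : ActsOn N T) : ActsOn (M * N) (S ∪ T) := by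
  constructor
  · intro x y hxy s hs
    rw [Finset.mem_union] at hs
    push_neg at hs
    rw [Matrix.mul_apply] at hxy
    obtain ⟨z, _, hne⟩ := Finset.exists_ne_zero_of_sum_ne_zero hxy
    exact (hM.1 x z (left_ne_zero_of_mul hne) s hs.1).trans
      (hN.1 z y (right_ne_zero_of_mul hne) s hs.2)
  · intro x y x' y' hxx' hyy' hxy hx'y'
    rw [Matrix.mul_apply, Matrix.mul_apply]
    set e : (∀ s, F s) ≃ (∀ s, F s) :=
      Equiv.piCongrRight (fun s => if s ∈ S ∪ T then Equiv.refl (F s) else Equiv.swap (x s) (x' s))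
      with he
    have heIn : ∀ (z : ∀ s, F s) (s : σ), s ∈ S ∪ T → e z s = z s := by
      intro z s hs
      show (if s ∈ S ∪ T then Equiv.refl (F s) else Equiv.swap (x s) (x' s)) (z s) = z s
      rw [if_pos hs]; rfl
    have heOut : ∀ (z : ∀ s, F s) (s : σ), s ∉ S ∪ T → e z s = Equiv.swap (x s) (x' s) (z s) := by
      intro z s hs
      show (if s ∈ S ∪ T then Equiv.refl (F s) else Equiv.swap (x s) (x' s)) (z s)
        = Equiv.swap (x s) (x' s) (z s)
      rw [if_neg hs]
    rw [← Equiv.sum_comp e (fun z => M x' z * N z y')]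
    apply Finset.sum_congr rfl
    intro z _
    by_cases h1 : ∀ s ∉ S, x s = z s
    · have hez : ∀ s ∉ S, x' s = e z s := by
        intro s hs
        by_cases hsT : s ∈ T
        · rw [heIn z s (Finset.mem_union_right S hsT), ← h1 s hs]
          exact (hxx' s (Finset.mem_union_right S hsT)).symm
        · have hs' : s ∉ S ∪ T := by simp [hs, hsT]
          rw [heOut z s hs', ← h1 s hs, Equiv.swap_apply_left]
      by_cases h2 : ∀ s ∉ T, z s = y s
      · have eM : M x z = M x' (e z) := by
          apply hM.2
          · intro s hs; exact hxx' s (Finset.mem_union_left T hs)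
          · intro s hs; exact (heIn z s (Finset.mem_union_left T hs)).symm
          · exact h1
          · exact hez
        have eN : N z y = N (e z) y' := by
          apply hN.2
          · intro s hs; exact (heIn z s (Finset.mem_union_right S hs)).symm
          · intro s hs; exact hyy' s (Finset.mem_union_right S hs)
          · exact h2
          · intro s hs
            by_cases hsS : s ∈ S
            · rw [heIn z s (Finset.mem_union_left T hsS), h2 s hs]
              exact hyy' s (Finset.mem_union_left T hsS)
            · have hs' : s ∉ S ∪ T := by simp [hsS, hs]
              rw [heOut z s hs', ← h1 s hsS, Equiv.swap_apply_left]
              exact hx'y' s hs'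
        rw [eM, eN]
      · push_neg at h2
        obtain ⟨s, hsT, hne⟩ := h2
        have hN1 : N z y = 0 := by by_contra h0; exact hne (hN.1 z y h0 s hsT)
        have hN2 : N (e z) y' = 0 := by
          by_contra h0
          have := hN.1 (e z) y' h0 s hsT
          by_cases hsS : s ∈ S
          · rw [heIn z s (Finset.mem_union_left T hsS), ← hyy' s (Finset.mem_union_left T hsS)] at this
            exact hne this
          · have hs' : s ∉ S ∪ T := by simp [hsS, hsT]
            exact hne ((h1 s hsS).symm.trans (hxy s hs'))
        rw [hN1, hN2, mul_zero, mul_zero]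
    · push_neg at h1
      obtain ⟨s, hsS, hne⟩ := h1
      have hM1 : M x z = 0 := by by_contra h0; exact hne (hM.1 x z h0 s hsS)
      have hM2 : M x' (e z) = 0 := by
        by_contra h0
        have := hM.1 x' (e z) h0 s hsS
        by_cases hsT : s ∈ T
        · rw [heIn z s (Finset.mem_union_right S hsT),
            ← hxx' s (Finset.mem_union_right S hsT)] at this
          exact hne this
        · have hs' : s ∉ S ∪ T := by simp [hsS, hsT]
          rw [heOut z s hs'] at this
          have h' : Equiv.swap (x s) (x' s) (z s) = x' s := this.symm
          have h'' := congrArg (Equiv.swap (x s) (x' s)) h'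
          rw [Equiv.swap_apply_self, Equiv.swap_apply_right] at h''
          exact hne h''.symm
      rw [hM1, hM2, zero_mul, zero_mul]

end Lemmas

/-- `Connects supp S T L` : the list `L` of interaction labels forms a path in
the interaction graph from the set of sites `S` to the set of sites `T`: the
support of the first interaction meets `S`, consecutive supports meet, and the
last support meets `T` (for the empty list, `S` must meet `T` directly). -/
def Connects {σ : Type*} [DecidableEq σ] {ι : Type*} (supp : ι → Finset σ) :
    Finset σ → Finset σ → List ι → Prop
  | S, T, [] => (S ∩ T).Nonempty
  | S, T, i :: L => (S ∩ supp i).Nonempty ∧ Connects supp (supp i) T L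

section Main
variable {σ : Type*} [Fintype σ] [DecidableEq σ] {F : σ → Type*}
  [∀ s, Fintype (F s)] [∀ s, DecidableEq (F s)] {ι : Type*} [Fintype ι]

/-- Matrices that are sums of pieces supported on sets at distance `≥ l - j` from `TU`. -/
inductive Good (supp : ι → Finset σ) (TU : Finset σ) (l : ℕ) :
    ℕ → Matrix (∀ s, F s) (∀ s, F s) ℂ → Prop
  | base (j : ℕ) (C : Matrix (∀ s, F s) (∀ s, F s) ℂ) (S : Finset σ)
      (hC : ActsOn C S) (hb : ∀ L : List ι, Connects supp S TU L → l ≤ j + L.length) :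
      Good supp TU l j C
  | add (j : ℕ) (M N : Matrix (∀ s, F s) (∀ s, F s) ℂ) :
      Good supp TU l j M → Good supp TU l j N → Good supp TU l j (M + N)

variable {supp : ι → Finset σ} {TU : Finset σ} {l : ℕ}

lemma Good.zero (j : ℕ) : Good supp TU l j (0 : Matrix (∀ s, F s) (∀ s, F s) ℂ) := by
  refine Good.base j 0 ∅ (ActsOn.zero ∅) ?_
  intro L hL
  exfalso
  cases L with
  | nil => simp [Connects, Finset.empty_inter] at hL
  | cons i L => simp [Connects, Finset.empty_inter] at hL

lemma Good.sum {j : ℕ} {t : Finset ι} {f : ι → Matrix (∀ s, F s) (∀ s, F s) ℂ}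
    (hf : ∀ i ∈ t, Good supp TU l j (f i)) : Good supp TU l j (∑ i ∈ t, f i) :=
  Finset.sum_induction f _ (fun a b ha hb => Good.add j a b ha hb) (Good.zero j) hf

lemma Good.commute {j : ℕ} (hj : j < l) {HU : Matrix (∀ s, F s) (∀ s, F s) ℂ}
    (hHU : ActsOn HU TU) {M : Matrix (∀ s, F s) (∀ s, F s) ℂ}
    (hM : Good supp TU l j M) : HU * M = M * HU := by
  induction hM with
  | base C S hC hb =>
      have hd : ∀ s, s ∈ TU → s ∉ S := by
        intro s hsTU hsS
        have := hb [] ⟨s, Finset.mem_inter.mpr ⟨hsS, hsTU⟩⟩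
        simp at this
        omega
      exact commute_of_disjoint hHU hC hd
  | add M N _ _ ihM ihN => rw [mul_add, add_mul, ihM, ihN]

lemma Good.step {j : ℕ} {M : Matrix (∀ s, F s) (∀ s, F s) ℂ}
    (hM : Good supp TU l j M) (h : ι → Matrix (∀ s, F s) (∀ s, F s) ℂ)
    (hacts : ∀ i, ActsOn (h i) (supp i)) (i : ι) :
    Good supp TU l (j + 1) (h i * M - M * h i) := by
  induction hM with
  | base C S hC hb =>
      by_cases hd : (S ∩ supp i).Nonempty
      · refine Good.base (j + 1) _ (supp i ∪ S) ?_ ?_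
        · refine ActsOn.sub ((hacts i).mul hC) ?_
          exact (hC.mul (hacts i)).mono (by rw [Finset.union_comm])
        · intro L hL
          cases L with
          | nil =>
              obtain ⟨s, hs⟩ := hL
              rw [Finset.mem_inter, Finset.mem_union] at hs
              rcases hs.1 with hsi | hsS
              · have := hb [i] ⟨hd, ⟨s, Finset.mem_inter.mpr ⟨hsi, hs.2⟩⟩⟩
                simp at this ⊢
                omega
              · have := hb [] ⟨s, Finset.mem_inter.mpr ⟨hsS, hs.2⟩⟩
                simp at this ⊢
                omega
          | cons i₁ L' =>
              obtain ⟨⟨s, hs⟩, hrest⟩ := hL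
              rw [Finset.mem_inter, Finset.mem_union] at hs
              rcases hs.1 with hsi | hsS
              · have := hb (i :: i₁ :: L')
                  ⟨hd, ⟨s, Finset.mem_inter.mpr ⟨hsi, hs.2⟩⟩, hrest⟩
                simp at this ⊢
                omega
              · have := hb (i₁ :: L') ⟨⟨s, Finset.mem_inter.mpr ⟨hsS, hs.2⟩⟩, hrest⟩
                simp at this ⊢
                omega
      · have hcomm : h i * C = C * h i := by
          refine commute_of_disjoint (hacts i) hC ?_
          intro s hsi hsS
          exact hd ⟨s, Finset.mem_inter.mpr ⟨hsS, hsi⟩⟩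
        rw [hcomm, sub_self]
        exact Good.zero _
  | add M N _ _ ihM ihN =>
      have : h i * (M + N) - (M + N) * h i = (h i * M - M * h i) + (h i * N - N * h i) := by
        rw [mul_add, add_mul]
        abel
      rw [this]
      exact Good.add _ _ _ ihM ihN

end Main

/-- If the supports of `A` and of the unrestricted part `H^U` are at graph
distance at least `l` in the interaction graph of `H = Σᵢ hᵢ` (i.e. at least
`l` of the local terms `hᵢ` are needed to connect them), then for all `n ≤ l`
the iterated commutators agree: `ad_{H+H^U}^n(A) = ad_H^n(A)`. -/
theorem stmt4 {σ : Type*} [Fintype σ] [DecidableEq σ]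
    {F : σ → Type*} [∀ s, Fintype (F s)] [∀ s, DecidableEq (F s)]
    {ι : Type*} [Fintype ι]
    (h : ι → Matrix (∀ s, F s) (∀ s, F s) ℂ)
    (supp : ι → Finset σ)
    (hacts : ∀ i, ActsOn (h i) (supp i))
    (A HU : Matrix (∀ s, F s) (∀ s, F s) ℂ)
    (TA TU : Finset σ)
    (hA : ActsOn A TA) (hHU : ActsOn HU TU)
    (hherm : (∑ i, h i).IsHermitian) (hhermU : HU.IsHermitian)
    (l : ℕ)
    (hdist : ∀ L : List ι, Connects supp TA TU L → l ≤ L.length)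
    (H Htot : Matrix (∀ s, F s) (∀ s, F s) ℂ)
    (hH : H = ∑ i, h i) (hHtot : Htot = H + HU)
    (n : ℕ) (hn : n ≤ l) :
    (fun X => Htot * X - X * Htot)^[n] A = (fun X => H * X - X * H)^[n] A := by
  have key : ∀ m, m ≤ l →
      (fun X => Htot * X - X * Htot)^[m] A = (fun X => H * X - X * H)^[m] A ∧
      Good supp TU l m ((fun X => H * X - X * H)^[m] A) := by
    intro m
    induction m with
    | zero =>
        intro _
        exact ⟨rfl, Good.base 0 A TA hA (fun L hL => by simpa using hdist L hL)⟩
    | succ m ih =>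
        intro hm
        obtain ⟨heq, hgood⟩ := ih (le_of_lt (Nat.lt_of_lt_of_le (Nat.lt_succ_self m) hm))
        set X := (fun X => H * X - X * H)^[m] A with hX
        have hcomm : HU * X = X * HU :=
          Good.commute (Nat.lt_of_lt_of_le (Nat.lt_succ_self m) hm) hHU hgood
        constructor
        · rw [Function.iterate_succ_apply', Function.iterate_succ_apply', heq, ← hX]
          show Htot * X - X * Htot = H * X - X * H
          rw [hHtot, add_mul, mul_add, hcomm]
          abel
        · rw [Function.iterate_succ_apply', ← hX]
          show Good supp TU l (m + 1) (H * X - X * H)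
          have hexp : H * X - X * H = ∑ i, (h i * X - X * h i) := by
            rw [hH, Finset.sum_mul, Finset.mul_sum, Finset.sum_sub_distrib]
          rw [hexp]
          exact Good.sum (fun i _ => Good.step hgood h hacts i)
  exact (key n hn).1
end

section
/- Let ρ be a density operator commuting with self-adjoint H on a finite-dimensional Hilbert space, A an operator with pinching A_diag, and define A̅ = Σ_{k,l} Π_k A Π_l · sign(E_l − E_k) where Π_k are spectral projections of H with eigenvalues E_k. Then Tr(A̅† ρ A̅) = Tr(A† ρ A) − Tr(A_diag† ρ A_diag). -/
open scoped Matrix ComplexOrder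

/-- With `H = Σ_k E_k P_k` a spectral decomposition (distinct eigenvalues),
`ρ` a density operator commuting with `H`, `A` an operator with pinching
`A_diag = Σ_k P_k A P_k`, and `A̅ = Σ_{k,l} P_k A P_l · sign(E_l − E_k)`,
one has `Tr(A̅† ρ A̅) = Tr(A† ρ A) − Tr(A_diag† ρ A_diag)`. -/
theorem stmt8 {d : Type*} [Fintype d] [DecidableEq d]
    {m : Type*} [Fintype m]
    (P : m → Matrix d d ℂ) (E : m → ℝ)
    (hherm : ∀ l, (P l).IsHermitian)
    (hidem : ∀ l, P l * P l = P l)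
    (horth : ∀ l l', l ≠ l' → P l * P l' = 0)
    (hsum : ∑ l, P l = 1)
    (hEinj : Function.Injective E)
    (H : Matrix d d ℂ) (hH : H = ∑ l, (E l : ℂ) • P l)
    (ρ : Matrix d d ℂ) (hρ : ρ.PosSemidef) (hρ1 : ρ.trace = 1)
    (hρH : ρ * H = H * ρ)
    (A : Matrix d d ℂ)
    (Adiag : Matrix d d ℂ) (hAdiag : Adiag = ∑ k, P k * A * P k)
    (Abar : Matrix d d ℂ)
    (hAbar : Abar = ∑ k, ∑ l, ((Real.sign (E l - E k) : ℝ) : ℂ) • (P k * A * P l)) :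
    (Abarᴴ * ρ * Abar).trace = (Aᴴ * ρ * A).trace - (Adiagᴴ * ρ * Adiag).trace := by
  classical
  -- ρ is block diagonal w.r.t. the spectral projections
  have hcross : ∀ k k', k ≠ k' → P k * ρ * P k' = 0 := by
    intro k k' hkk'
    have h2 : P k * (ρ * H) * P k' = P k * (H * ρ) * P k' := by rw [hρH]
    rw [hH] at h2
    simp only [Finset.mul_sum, Finset.sum_mul, mul_smul_comm, smul_mul_assoc, mul_assoc] at h2
    have hL : (∑ l, (E l : ℂ) • (P k * (ρ * (P l * P k'))))
        = (E k' : ℂ) • (P k * (ρ * P k')) := by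
      rw [Finset.sum_eq_single k']
      · rw [hidem]
      · intro l _ hl
        rw [horth l k' hl]
        simp
      · simp
    have hR : (∑ l, (E l : ℂ) • (P k * (P l * (ρ * P k'))))
        = (E k : ℂ) • (P k * (ρ * P k')) := by
      rw [Finset.sum_eq_single k]
      · rw [← mul_assoc, hidem]
      · intro l _ hl
        rw [← mul_assoc, horth k l (Ne.symm hl)]
        simp
      · simp
    rw [hL, hR] at h2
    have h3 : ((E k' : ℂ) - (E k : ℂ)) • (P k * (ρ * P k')) = 0 := by
      rw [sub_smul, h2, sub_self]
    have h4 : ((E k' : ℂ) - (E k : ℂ)) ≠ 0 := by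
      rw [sub_ne_zero]
      intro h
      exact hkk' (hEinj (by exact_mod_cast h.symm))
    rw [smul_eq_zero] at h3
    rw [mul_assoc]
    exact h3.resolve_left h4
  have hcross' : ∀ k k' (X : Matrix d d ℂ), k ≠ k' → P k * (ρ * (P k' * X)) = 0 := by
    intro k k' X h
    have := congrArg (· * X) (hcross k k' h)
    simpa [mul_assoc] using this
  have hct : ∀ k l, (P k * A * P l)ᴴ = P l * (Aᴴ * P k) := by
    intro k l
    simp [Matrix.conjTranspose_mul, (hherm k).eq, (hherm l).eq, mul_assoc]
  -- orthogonality of traces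
  obtain ⟨T, hT⟩ : ∃ T : m → m → ℂ, ∀ k l,
      T k l = ((P k * A * P l)ᴴ * ρ * (P k * A * P l)).trace := ⟨_, fun _ _ => rfl⟩
  have horthT : ∀ k l k' l',
      ((P k * A * P l)ᴴ * ρ * (P k' * A * P l')).trace
      = if k' = k ∧ l' = l then T k l else 0 := by
    intro k l k' l'
    by_cases hk : k' = k
    · subst hk
      by_cases hl : l' = l
      · subst hl; simp [hT]
      · rw [if_neg (by tauto), Matrix.trace_mul_comm, hct]
        simp only [mul_assoc]
        rw [← mul_assoc (P l') (P l), horth l' l hl]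
        simp
    · rw [if_neg (by tauto), hct]
      simp only [mul_assoc]
      rw [hcross' k k' (A * P l') (fun h => hk h.symm)]
      simp
  have key : ∀ c : m → m → ℂ,
      ((∑ k, ∑ l, c k l • (P k * A * P l))ᴴ * ρ * (∑ k, ∑ l, c k l • (P k * A * P l))).trace
      = ∑ k, ∑ l, ((starRingEnd ℂ) (c k l) * c k l) * T k l := by
    intro c
    simp only [Matrix.conjTranspose_sum, Matrix.conjTranspose_smul, Finset.sum_mul,
      Finset.mul_sum, Matrix.smul_mul, Matrix.mul_smul, Matrix.trace_sum, Matrix.trace_smul,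
      smul_smul]
    simp only [horthT, smul_ite, smul_zero, ite_and, Finset.sum_ite_eq, Finset.mem_univ,
      if_true, Finset.sum_ite_irrel, Finset.sum_const_zero]
    exact Finset.sum_congr rfl fun k _ => Finset.sum_congr rfl fun l _ => by
      rw [smul_eq_mul, starRingEnd_apply]; ring
  -- express the three operators in the canonical form
  have hA' : A = ∑ k, ∑ l, (1 : ℂ) • (P k * A * P l) := by
    have h1 : ∑ k, ∑ l, (1 : ℂ) • (P k * A * P l) = (∑ k, P k) * A * (∑ l, P l) := by
      simp only [one_smul, Finset.sum_mul, Finset.mul_sum, mul_assoc]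
      exact Finset.sum_comm
    rw [h1, hsum, one_mul, mul_one]
  have hAdiag' : Adiag = ∑ k, ∑ l, (if k = l then (1 : ℂ) else 0) • (P k * A * P l) := by
    rw [hAdiag]
    refine Finset.sum_congr rfl fun k _ => ?_
    rw [Finset.sum_eq_single k] <;> simp +contextual [Ne.symm]
  have e1 : (Abarᴴ * ρ * Abar).trace
      = ∑ k, ∑ l, ((starRingEnd ℂ) ((Real.sign (E l - E k) : ℝ) : ℂ) *
          ((Real.sign (E l - E k) : ℝ) : ℂ)) * T k l := by
    rw [hAbar]; exact key _
  have e2 : (Aᴴ * ρ * A).trace = ∑ k, ∑ l, T k l := by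
    rw [hA', key]
    simp
  have e3 : (Adiagᴴ * ρ * Adiag).trace = ∑ k, ∑ l, (if k = l then T k l else 0) := by
    rw [hAdiag', key]
    refine Finset.sum_congr rfl fun k _ => Finset.sum_congr rfl fun l _ => ?_
    by_cases h : k = l <;> simp [h]
  rw [e1, e2, e3, ← Finset.sum_sub_distrib]
  refine Finset.sum_congr rfl fun k _ => ?_
  rw [← Finset.sum_sub_distrib]
  refine Finset.sum_congr rfl fun l _ => ?_
  by_cases h : k = l
  · subst h
    simp
  · have hEne : E l - E k ≠ 0 := sub_ne_zero.mpr (fun hE => h (hEinj hE).symm)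
    have hs : Real.sign (E l - E k) * Real.sign (E l - E k) = 1 := by
      rcases lt_or_gt_of_ne hEne with hlt | hgt
      · rw [Real.sign_of_neg hlt]; norm_num
      · rw [Real.sign_of_pos hgt]; norm_num
    rw [if_neg h, Complex.conj_ofReal, ← Complex.ofReal_mul, hs]
    simp
end

section
/- For a density operator ρ commuting with self-adjoint H and any operator A with pinching A_diag onto H's eigenspaces, Tr(A_diag† ρ A_diag) equals the time average lim_{T→∞} (1/T)∫₀^T Tr(ρ A(t) A†) dt, where A(t) = e^{iHt} A e^{−iHt}. -/
/-!
In the eigenbasis of `H` the Heisenberg-picture operator is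
`A(t) = ∑ₖₗ e^{i(E_k - E_l)t} P_k A P_l`, so `Tr(ρ A(t) A†)` is a trigonometric polynomial in `t`
whose Cesàro mean is its constant term `∑ₖ Tr(ρ P_k A P_k A†)`, the `E_k` being distinct.
Since `ρ` commutes with `H`, it commutes with every `P_k`; this kills the cross terms
`P_k A† P_k ρ P_l A P_l` (`k ≠ l`) of `Tr(A_diag† ρ A_diag)` and leaves the same sum.
-/

open scoped Matrix ComplexOrder Matrix.Norms.L2Operator

open Complex Filter Topology

namespace OrthogonalIdempotents

variable {ι R 𝕜 : Type*} [Fintype ι] [CommSemiring 𝕜] [Semiring R] [Algebra 𝕜 R] {e : ι → R}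

theorem sum_smul_mul (he : OrthogonalIdempotents e) (f : ι → 𝕜) (i : ι) :
    (∑ j, f j • e j) * e i = f i • e i := by
  classical
  simp [Finset.sum_mul, he.mul_eq]

theorem mul_sum_smul (he : OrthogonalIdempotents e) (f : ι → 𝕜) (i : ι) :
    e i * (∑ j, f j • e j) = f i • e i := by
  classical
  simp [Finset.mul_sum, he.mul_eq]

end OrthogonalIdempotents

namespace CompleteOrthogonalIdempotents

variable {ι R : Type*} [Fintype ι] {e : ι → R}

def piAlgHom {𝕜 : Type*} [CommSemiring 𝕜] [Semiring R] [Algebra 𝕜 R]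
    (he : CompleteOrthogonalIdempotents e) : (ι → 𝕜) →ₐ[𝕜] R :=
  AlgHom.ofLinearMap (Fintype.linearCombination 𝕜 e)
    (by simp [Fintype.linearCombination_apply, he.complete])
    (fun f g => by
      classical
      simp only [Fintype.linearCombination_apply, Finset.sum_mul_sum, smul_mul_smul_comm,
        he.mul_eq, smul_ite, smul_zero, Finset.sum_ite_eq, Finset.mem_univ, if_true, Pi.mul_apply])

theorem piAlgHom_apply {𝕜 : Type*} [CommSemiring 𝕜] [Semiring R] [Algebra 𝕜 R]
    (he : CompleteOrthogonalIdempotents e) (f : ι → 𝕜) :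
    he.piAlgHom f = ∑ i, f i • e i :=
  Fintype.linearCombination_apply 𝕜 e f

theorem commute_of_commute_sum_smul {𝕜 : Type*} [Field 𝕜] [Ring R] [Algebra 𝕜 R]
    (he : CompleteOrthogonalIdempotents e) {E : ι → 𝕜} (hE : Function.Injective E) {x : R}
    (hx : Commute x (∑ j, E j • e j)) (i : ι) : Commute x (e i) := by
  set H := ∑ j, E j • e j
  have hoff : ∀ k l, k ≠ l → e k * x * e l = 0 := by
    intro k l hkl
    have key : (E l - E k) • (e k * x * e l) = e k * (x * H - H * x) * e l := by
      rw [mul_sub, sub_mul, ← mul_assoc, mul_assoc _ H, he.sum_smul_mul, ← mul_assoc (e k) H,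
        he.mul_sum_smul, sub_smul, mul_smul_comm, smul_mul_assoc, smul_mul_assoc]
    rw [hx.eq, sub_self, mul_zero, zero_mul] at key
    exact (smul_eq_zero.mp key).resolve_left (sub_ne_zero.mpr (hE.ne hkl.symm))
  calc x * e i = (∑ k, e k) * x * e i := by rw [he.complete, one_mul]
    _ = e i * x * e i := by
      rw [Finset.sum_mul, Finset.sum_mul, Finset.sum_eq_single i (fun k _ hk => hoff k i hk)
        (by simp)]
    _ = e i * x * ∑ k, e k := by
      rw [Finset.mul_sum, Finset.sum_eq_single i (fun k _ hk => hoff i k (Ne.symm hk))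
        (by simp)]
    _ = e i * x := by rw [he.complete, mul_one]

theorem exp_sum_smul [NormedRing R] [NormedAlgebra ℂ R] [Algebra ℚ R]
    (he : CompleteOrthogonalIdempotents e) (f : ι → ℂ) :
    NormedSpace.exp (∑ i, f i • e i) = ∑ i, cexp (f i) • e i := by
  have hcont : Continuous (he.piAlgHom (𝕜 := ℂ)) :=
    (he.piAlgHom (𝕜 := ℂ)).toLinearMap.continuous_of_finiteDimensional
  rw [← he.piAlgHom_apply, ← NormedSpace.map_exp _ hcont, he.piAlgHom_apply]
  simp [Complex.exp_eq_exp_ℂ]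

theorem exp_smul_mul_mul_exp_neg_smul [NormedRing R] [NormedAlgebra ℂ R] [Algebra ℚ R]
    (he : CompleteOrthogonalIdempotents e) (E : ι → ℂ) (z : ℂ) (x : R) :
    NormedSpace.exp (z • ∑ i, E i • e i) * x * NormedSpace.exp ((-z) • ∑ i, E i • e i) =
      ∑ k, ∑ l, cexp (z * (E k - E l)) • (e k * x * e l) := by
  simp only [Finset.smul_sum, smul_smul, he.exp_sum_smul, Finset.sum_mul, Finset.mul_sum,
    smul_mul_assoc, mul_smul_comm]
  refine Finset.sum_comm.trans (Fintype.sum_congr _ _ fun k => Fintype.sum_congr _ _ fun l => ?_)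
  rw [← Complex.exp_add]
  congr 2
  ring

end CompleteOrthogonalIdempotents

theorem OrthogonalIdempotents.trace_conjTranspose_sum_mul_mul_sum {d m 𝕜 : Type*} [Fintype d]
    [DecidableEq d] [Fintype m] [CommRing 𝕜] [StarRing 𝕜] {P : m → Matrix d d 𝕜}
    (hP : OrthogonalIdempotents P) (hherm : ∀ l, (P l).IsHermitian) {ρ : Matrix d d 𝕜}
    (hρ : ∀ l, Commute ρ (P l)) (A : Matrix d d 𝕜) :
    ((∑ l, P l * A * P l)ᴴ * ρ * ∑ l, P l * A * P l).trace =
      ∑ l, (ρ * (P l * A * P l) * Aᴴ).trace := by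
  classical
  have hstar : (∑ l, P l * A * P l)ᴴ = ∑ l, P l * Aᴴ * P l := by
    simp [Matrix.conjTranspose_sum, (hherm _).eq, mul_assoc]
  have hprod : ∀ k l, P k * Aᴴ * P k * ρ * (P l * A * P l) =
      if k = l then P k * (Aᴴ * (ρ * (P k * A * P k))) else 0 := by
    intro k l
    calc P k * Aᴴ * P k * ρ * (P l * A * P l) = P k * Aᴴ * ρ * (P k * P l) * A * P l := by
          simp only [mul_assoc, (hρ k).left_comm]
      _ = _ := by
          rw [hP.mul_eq]
          split_ifs with hkl
          · subst hkl
            simp only [mul_assoc]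
          · simp
  rw [hstar, Finset.sum_mul, Finset.sum_mul_sum]
  simp only [hprod, Finset.sum_ite_eq, Finset.mem_univ, if_true, Matrix.trace_sum]
  refine Fintype.sum_congr _ _ fun l => ?_
  rw [Matrix.trace_mul_comm, mul_assoc Aᴴ, mul_assoc ρ, mul_assoc (P l * A), (hP.idem l).eq,
    Matrix.trace_mul_comm, mul_assoc]

theorem tendsto_inv_mul_integral_exp_ofReal_mul_I (ω : ℝ) :
    Tendsto (fun T : ℝ => (T : ℂ)⁻¹ * ∫ t in (0 : ℝ)..T, cexp (ω * I * t)) atTop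
      (𝓝 (if ω = 0 then 1 else 0)) := by
  split_ifs with hω
  · refine tendsto_const_nhds.congr' ?_
    filter_upwards [eventually_ne_atTop 0] with T hT
    simp [hω, hT]
  have hc : (ω : ℂ) * I ≠ 0 := mul_ne_zero (ofReal_ne_zero.mpr hω) I_ne_zero
  have hbound : ∀ T : ℝ, ‖∫ t in (0 : ℝ)..T, cexp (ω * I * t)‖ ≤ 2 / ‖(ω : ℂ) * I‖ := by
    intro T
    rw [integral_exp_mul_complex hc, norm_div]
    gcongr
    calc ‖cexp (ω * I * T) - cexp (ω * I * (0 : ℝ))‖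
        ≤ ‖cexp (ω * I * T)‖ + ‖cexp (ω * I * (0 : ℝ))‖ := norm_sub_le _ _
      _ = 2 := by
        simp only [mul_right_comm _ I, ← ofReal_mul, norm_exp_ofReal_mul_I]
        norm_num
  have hinv : Tendsto (fun T : ℝ => (T : ℂ)⁻¹) atTop (𝓝 0) := by
    simpa [Function.comp_def] using (continuous_ofReal.tendsto 0).comp tendsto_inv_atTop_zero
  exact hinv.zero_mul_isBoundedUnder_le ⟨_, eventually_map.mpr (Eventually.of_forall hbound)⟩

theorem tendsto_inv_smul_integral_sum_exp_mul {ι : Type*} [Fintype ι] (ω : ι → ℝ) (c : ι → ℂ) :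
    Tendsto (fun T : ℝ => (T : ℂ)⁻¹ • ∫ t in (0 : ℝ)..T, ∑ i, cexp (ω i * I * t) * c i) atTop
      (𝓝 (∑ i, if ω i = 0 then c i else 0)) := by
  have hmean : ∀ T : ℝ, (T : ℂ)⁻¹ • ∫ t in (0 : ℝ)..T, ∑ i, cexp (ω i * I * t) * c i =
      ∑ i, ((T : ℂ)⁻¹ * ∫ t in (0 : ℝ)..T, cexp (ω i * I * t)) * c i := by
    intro T
    rw [intervalIntegral.integral_finsetSum fun i _ =>
      (by fun_prop : Continuous _).intervalIntegrable _ _, smul_eq_mul, Finset.mul_sum]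
    simp only [intervalIntegral.integral_mul_const, mul_assoc]
  simp only [hmean]
  refine tendsto_finsetSum _ fun i _ => ?_
  simpa using (tendsto_inv_mul_integral_exp_ofReal_mul_I (ω i)).mul_const (c i)

theorem stmt9_general {d : Type*} [Fintype d] [DecidableEq d]
    {m : Type*} [Fintype m]
    (P : m → Matrix d d ℂ) (E : m → ℝ)
    (hherm : ∀ l, (P l).IsHermitian)
    (horth : ∀ l l', l ≠ l' → P l * P l' = 0)
    (hsum : ∑ l, P l = 1)
    (hEinj : Function.Injective E)
    (H : Matrix d d ℂ) (hH : H = ∑ l, (E l : ℂ) • P l)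
    (ρ : Matrix d d ℂ)
    (hρH : ρ * H = H * ρ)
    (A : Matrix d d ℂ)
    (Adiag : Matrix d d ℂ) (hAdiag : Adiag = ∑ l, P l * A * P l)
    (At : ℝ → Matrix d d ℂ)
    (hAt : ∀ t : ℝ, At t =
      NormedSpace.exp ((Complex.I * (t : ℂ)) • H) * A *
        NormedSpace.exp ((-(Complex.I * (t : ℂ))) • H)) :
    Filter.Tendsto
      (fun T : ℝ => (T : ℂ)⁻¹ • ∫ t in (0:ℝ)..T, (ρ * At t * Aᴴ).trace)
      Filter.atTop (nhds ((Adiagᴴ * ρ * Adiag).trace)) := by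
  classical
  subst hH hAdiag
  have hP : CompleteOrthogonalIdempotents P :=
    CompleteOrthogonalIdempotents.iff_ortho_complete.mpr ⟨fun k l => horth k l, hsum⟩
  have hρP : ∀ l, Commute ρ (P l) :=
    hP.commute_of_commute_sum_smul (ofReal_injective.comp hEinj) hρH
  have htrace : ∀ t : ℝ, (ρ * At t * Aᴴ).trace = ∑ p : m × m,
      cexp ((E p.1 - E p.2 : ℝ) * I * t) * (ρ * (P p.1 * A * P p.2) * Aᴴ).trace := by
    intro t
    rw [hAt, hP.exp_smul_mul_mul_exp_neg_smul]
    simp only [Finset.mul_sum, Finset.sum_mul, mul_smul_comm, smul_mul_assoc, Matrix.trace_sum,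
      Matrix.trace_smul, smul_eq_mul, Fintype.sum_prod_type]
    refine Fintype.sum_congr _ _ fun k => Fintype.sum_congr _ _ fun l => ?_
    congr 2
    push_cast
    ring
  simp only [htrace]
  convert tendsto_inv_smul_integral_sum_exp_mul _ _ using 2
  rw [hP.trace_conjTranspose_sum_mul_mul_sum hherm hρP, Fintype.sum_prod_type]
  simp [sub_eq_zero, hEinj.eq_iff]

/-- For a density operator `ρ` commuting with self-adjoint
`H = Σ_l E_l P_l` (distinct eigenvalues) and any operator `A` with pinching
`A_diag = Σ_l P_l A P_l`, the quantity `Tr(A_diag† ρ A_diag)` equals the time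
average `lim_{T→∞} (1/T)∫₀^T Tr(ρ A(t) A†) dt`, where
`A(t) = e^{iHt} A e^{−iHt}`. -/
theorem stmt9 {d : Type*} [Fintype d] [DecidableEq d]
    {m : Type*} [Fintype m]
    (P : m → Matrix d d ℂ) (E : m → ℝ)
    (hherm : ∀ l, (P l).IsHermitian)
    (hidem : ∀ l, P l * P l = P l)
    (horth : ∀ l l', l ≠ l' → P l * P l' = 0)
    (hsum : ∑ l, P l = 1)
    (hEinj : Function.Injective E)
    (H : Matrix d d ℂ) (hH : H = ∑ l, (E l : ℂ) • P l)
    (ρ : Matrix d d ℂ) (hρ : ρ.PosSemidef) (hρ1 : ρ.trace = 1)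
    (hρH : ρ * H = H * ρ)
    (A : Matrix d d ℂ)
    (Adiag : Matrix d d ℂ) (hAdiag : Adiag = ∑ l, P l * A * P l)
    (At : ℝ → Matrix d d ℂ)
    (hAt : ∀ t : ℝ, At t =
      NormedSpace.exp ((Complex.I * (t : ℂ)) • H) * A *
        NormedSpace.exp ((-(Complex.I * (t : ℂ))) • H)) :
    Filter.Tendsto
      (fun T : ℝ => (T : ℂ)⁻¹ • ∫ t in (0:ℝ)..T, (ρ * At t * Aᴴ).trace)
      Filter.atTop (nhds ((Adiagᴴ * ρ * Adiag).trace)) :=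
  stmt9_general P E hherm horth hsum hEinj H hH ρ hρH A Adiag hAdiag At hAt
end

section
/- Let p : ℝ → ℝ≥0 be a nonnegative measure (density) on frequencies, α > 0, l a positive integer, and suppose ∫ |ω|^n p(ω) dω ≤ C · α^{−n} · n! / 2^n for all 1 ≤ n ≤ l and ∫ p(ω) dω ≤ C₀. Then for every ω₀, the tail P(ω₀) := ∫_{|ω| ≥ |ω₀|} p(ω) dω satisfies (Σ_{n=0}^{l} (α|ω₀|/2)^n / n!) · P(ω₀) ≤ C + C₀. -/
open MeasureTheory

lemma stmt11_geo (l : ℕ) : ∑ i ∈ Finset.range l, (4⁻¹ : ℝ) ^ (i + 1) ≤ 1 := by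
  induction l with
  | zero => simp
  | succ n ih =>
    have h : ∑ i ∈ Finset.range n, (4⁻¹ : ℝ) ^ (i + 1) ≤ 1 - 3⁻¹ * 4⁻¹ ^ n := by
      clear ih
      induction n with
      | zero => norm_num
      | succ m ih =>
        rw [Finset.sum_range_succ, pow_succ]
        have h4 : (0:ℝ) ≤ 4⁻¹ ^ m := by positivity
        nlinarith [ih]
    rw [Finset.sum_range_succ, pow_succ]
    have h4 : (0:ℝ) ≤ 4⁻¹ ^ n := by positivity
    nlinarith

/-- Tail bound from moment bounds: if `p ≥ 0` is integrable with all weighted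
moments `∫ |ω|^n p(ω) dω ≤ C α^{−n} n!/2^n` for `1 ≤ n ≤ l`, and
`∫ p ≤ C₀`, then for every `ω₀` the tail `P(ω₀) = ∫_{|ω| ≥ |ω₀|} p` satisfies
`(Σ_{n=0}^{l} (α|ω₀|/2)^n / n!) · P(ω₀) ≤ C + C₀`. -/
theorem stmt11 (p : ℝ → ℝ) (hp : ∀ ω, 0 ≤ p ω) (hint : Integrable p)
    (α : ℝ) (hα : 0 < α) (l : ℕ) (hl : 1 ≤ l) (C C₀ : ℝ)
    (hmomint : ∀ n : ℕ, 1 ≤ n → n ≤ l → Integrable (fun ω => |ω| ^ n * p ω))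
    (hmom : ∀ n : ℕ, 1 ≤ n → n ≤ l →
      ∫ ω, |ω| ^ n * p ω ≤ C * α⁻¹ ^ n * (n.factorial : ℝ) / 2 ^ n)
    (htot : ∫ ω, p ω ≤ C₀) (ω₀ : ℝ) :
    (∑ n ∈ Finset.range (l + 1), (α * |ω₀| / 2) ^ n / (n.factorial : ℝ)) *
        (∫ ω in {x : ℝ | |ω₀| ≤ |x|}, p ω) ≤ C + C₀ := by
  set S : Set ℝ := {x : ℝ | |ω₀| ≤ |x|} with hSdef
  have hSmeas : MeasurableSet S := measurableSet_le measurable_const measurable_abs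
  set P : ℝ := ∫ ω in S, p ω with hPdef
  have hP0 : 0 ≤ P := setIntegral_nonneg hSmeas (fun x _ => hp x)
  have hPC₀ : P ≤ C₀ := by
    refine le_trans ?_ htot
    exact setIntegral_le_integral hint (ae_of_all _ hp)
  have hC : 0 ≤ C := by
    have h1 := hmom 1 le_rfl hl
    have h2 : (0:ℝ) ≤ ∫ ω, |ω| ^ 1 * p ω :=
      integral_nonneg (fun x => mul_nonneg (by positivity) (hp x))
    have h3 : (0:ℝ) ≤ C * α⁻¹ ^ 1 * 1 / 2 ^ 1 := by
      simpa using le_trans h2 h1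
    have hαi : (0:ℝ) < α⁻¹ := by positivity
    nlinarith
  have key : ∀ n : ℕ, 1 ≤ n → n ≤ l →
      |ω₀| ^ n * P ≤ C * α⁻¹ ^ n * (n.factorial : ℝ) / 2 ^ n := by
    intro n h1 h2
    have e1 : |ω₀| ^ n * P = ∫ ω in S, |ω₀| ^ n * p ω := (integral_const_mul _ _).symm
    have e2 : ∫ ω in S, |ω₀| ^ n * p ω ≤ ∫ ω in S, |ω| ^ n * p ω := by
      refine setIntegral_mono_on ((hint.const_mul _).integrableOn)
        ((hmomint n h1 h2).integrableOn) hSmeas ?_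
      intro x hx
      exact mul_le_mul_of_nonneg_right (pow_le_pow_left₀ (abs_nonneg _) hx n) (hp x)
    have e3 : ∫ ω in S, |ω| ^ n * p ω ≤ ∫ ω, |ω| ^ n * p ω :=
      setIntegral_le_integral (hmomint n h1 h2)
        (ae_of_all _ (fun x => mul_nonneg (by positivity) (hp x)))
    calc |ω₀| ^ n * P = ∫ ω in S, |ω₀| ^ n * p ω := e1
      _ ≤ ∫ ω, |ω| ^ n * p ω := le_trans e2 e3
      _ ≤ _ := hmom n h1 h2
  have term : ∀ n : ℕ, 1 ≤ n → n ≤ l →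
      (α * |ω₀| / 2) ^ n / (n.factorial : ℝ) * P ≤ C * (4:ℝ)⁻¹ ^ n := by
    intro n h1 h2
    have hf : (0:ℝ) < (n.factorial : ℝ) := by exact_mod_cast n.factorial_pos
    have e1 : (α * |ω₀| / 2) ^ n / (n.factorial : ℝ) * P
        = (α / 2) ^ n / (n.factorial : ℝ) * (|ω₀| ^ n * P) := by
      rw [show α * |ω₀| / 2 = α / 2 * |ω₀| by ring, mul_pow]; ring
    have e2 : (α / 2) ^ n / (n.factorial : ℝ) * (|ω₀| ^ n * P)
        ≤ (α / 2) ^ n / (n.factorial : ℝ) * (C * α⁻¹ ^ n * (n.factorial : ℝ) / 2 ^ n) :=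
      mul_le_mul_of_nonneg_left (key n h1 h2) (by positivity)
    have e3 : (α / 2) ^ n / (n.factorial : ℝ) * (C * α⁻¹ ^ n * (n.factorial : ℝ) / 2 ^ n)
        = C * (4:ℝ)⁻¹ ^ n := by
      have hαα : α ^ n * α⁻¹ ^ n = 1 := by
        rw [← mul_pow, mul_inv_cancel₀ hα.ne', one_pow]
      field_simp
      have h22 : (2:ℝ) ^ n * (1 / 2) ^ n = 1 := by rw [← mul_pow]; norm_num
      rw [show (1 / (4:ℝ)) ^ n = (1 / 2) ^ n * (1 / 2) ^ n by rw [← mul_pow]; norm_num]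
      linear_combination (C * (1 / 2) ^ n) * hαα - (C * (1 / 2) ^ n) * h22
    calc (α * |ω₀| / 2) ^ n / (n.factorial : ℝ) * P
        = (α / 2) ^ n / (n.factorial : ℝ) * (|ω₀| ^ n * P) := e1
      _ ≤ _ := e2
      _ = _ := e3
  rw [Finset.sum_mul, Finset.sum_range_succ' (fun n => (α * |ω₀| / 2) ^ n / (n.factorial : ℝ) * P) l]
  have h0 : (α * |ω₀| / 2) ^ 0 / ((Nat.factorial 0 : ℕ) : ℝ) * P ≤ C₀ := by
    simpa using hPC₀
  have hsum : ∑ i ∈ Finset.range l, (α * |ω₀| / 2) ^ (i + 1) / ((i + 1).factorial : ℝ) * P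
      ≤ C := by
    calc ∑ i ∈ Finset.range l, (α * |ω₀| / 2) ^ (i + 1) / ((i + 1).factorial : ℝ) * P
        ≤ ∑ i ∈ Finset.range l, C * (4:ℝ)⁻¹ ^ (i + 1) := by
          refine Finset.sum_le_sum (fun i hi => ?_)
          exact term (i + 1) (Nat.succ_le_succ (Nat.zero_le _)) (Finset.mem_range.mp hi)
      _ = C * ∑ i ∈ Finset.range l, (4:ℝ)⁻¹ ^ (i + 1) := by rw [Finset.mul_sum]
      _ ≤ C * 1 := mul_le_mul_of_nonneg_left (stmt11_geo l) hC
      _ = C := mul_one C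
  linarith
end

section
/- Let b(t) = (1/2π) ∫ p(ω) [sin((ω+E)t/2)/((ω+E)/2)]² dω where p ≥ 0, E ≥ E_gap > 0, ∫ p(ω) dω ≤ 2π M², and the tail satisfies ∫_{|ω| ≥ E_gap/2} p(ω) dω ≤ 2π M² Q^{−1} for some Q > 0. Then b(t) ≤ M² (t² Q^{−1} + 16/E_gap²). -/
/-! Split the frequency axis at `-E_gap/2`. Below it `p` only carries tail mass and the kernel
is at most `t²`; above it `ω + E ≥ E_gap/2`, so the kernel is at most `16/E_gap²` and the total
mass bound applies. -/

open MeasureTheory Set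

lemma sq_sin_div_half_le_sq (a t : ℝ) : (Real.sin (a * t / 2) / (a / 2)) ^ 2 ≤ t ^ 2 := by
  rcases eq_or_ne a 0 with rfl | ha
  · simpa using sq_nonneg t
  · rw [div_pow, div_le_iff₀ (by positivity)]
    calc Real.sin (a * t / 2) ^ 2 ≤ (a * t / 2) ^ 2 := Real.sin_sq_le_sq
      _ = t ^ 2 * (a / 2) ^ 2 := by ring

lemma sq_sin_div_half_le_of_half_le {a c : ℝ} (hc : 0 < c) (ha : c / 2 ≤ a) (t : ℝ) :
    (Real.sin (a * t / 2) / (a / 2)) ^ 2 ≤ 16 / c ^ 2 :=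
  calc (Real.sin (a * t / 2) / (a / 2)) ^ 2 = Real.sin (a * t / 2) ^ 2 / (a / 2) ^ 2 := div_pow ..
    _ ≤ 1 / (a / 2) ^ 2 := by gcongr; exact Real.sin_sq_le_one _
    _ ≤ 1 / (c / 4) ^ 2 := by
      gcongr 1 / ?_
      exact pow_le_pow_left₀ (by positivity) (by linarith) 2
    _ = 16 / c ^ 2 := by ring

section WeightedIntegral

variable {α : Type*} [MeasurableSpace α] {μ : Measure α} {p k : α → ℝ} {S : Set α}

lemma setIntegral_mul_le_of_le {A : ℝ} (hS : MeasurableSet S) (hp : ∀ x, 0 ≤ p x)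
    (hpi : Integrable p μ) (hpk : Integrable (fun x => p x * k x) μ)
    (hk : ∀ x ∈ S, k x ≤ A) :
    ∫ x in S, p x * k x ∂μ ≤ A * ∫ x in S, p x ∂μ := by
  rw [← integral_const_mul]
  refine setIntegral_mono_on hpk.integrableOn (hpi.integrableOn.const_mul A) hS fun x hx => ?_
  rw [mul_comm A]
  exact mul_le_mul_of_nonneg_left (hk x hx) (hp x)

lemma integral_mul_le_of_le_of_le_compl {A B : ℝ} (hS : MeasurableSet S) (hp : ∀ x, 0 ≤ p x)
    (hpi : Integrable p μ) (hpk : Integrable (fun x => p x * k x) μ)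
    (hA : ∀ x ∈ S, k x ≤ A) (hB : ∀ x ∈ Sᶜ, k x ≤ B) :
    ∫ x, p x * k x ∂μ ≤ A * ∫ x in S, p x ∂μ + B * ∫ x in Sᶜ, p x ∂μ := by
  rw [← integral_add_compl hS hpk]
  exact add_le_add (setIntegral_mul_le_of_le hS hp hpi hpk hA)
    (setIntegral_mul_le_of_le hS.compl hp hpi hpk hB)

end WeightedIntegral

theorem stmt13_general (p : ℝ → ℝ) (hp : ∀ ω, 0 ≤ p ω) (hint : Integrable p)
    (E Egap M Q : ℝ) (hgap : 0 < Egap) (hE : Egap ≤ E)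
    (t : ℝ)
    (hker : Integrable (fun ω =>
      p ω * (Real.sin ((ω + E) * t / 2) / ((ω + E) / 2)) ^ 2))
    (htot : ∫ ω, p ω ≤ 2 * Real.pi * M ^ 2)
    (htail : ∫ ω in {x : ℝ | Egap / 2 ≤ |x|}, p ω ≤ 2 * Real.pi * M ^ 2 / Q)
    (b : ℝ → ℝ)
    (hb : b t = (1 / (2 * Real.pi)) *
      ∫ ω, p ω * (Real.sin ((ω + E) * t / 2) / ((ω + E) / 2)) ^ 2) :
    b t ≤ M ^ 2 * (t ^ 2 / Q + 16 / Egap ^ 2) := by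
  have hsplit := integral_mul_le_of_le_of_le_compl (A := t ^ 2) (B := 16 / Egap ^ 2)
    (measurableSet_Iio (a := -(Egap / 2))) hp hint hker
    (fun ω _ => sq_sin_div_half_le_sq (ω + E) t)
    fun ω hω => sq_sin_div_half_le_of_half_le hgap
      (by rw [mem_compl_iff, mem_Iio, not_lt] at hω; linarith) t
  have hlow : ∫ ω in Iio (-(Egap / 2)), p ω ≤ 2 * Real.pi * M ^ 2 / Q := by
    refine le_trans (setIntegral_mono_set hint.integrableOn (.of_forall hp) (.of_forall ?_)) htail
    intro x hx
    exact (le_neg.mpr (le_of_lt hx)).trans (neg_le_abs x)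
  have hhigh : ∫ ω in (Iio (-(Egap / 2)))ᶜ, p ω ≤ 2 * Real.pi * M ^ 2 :=
    (setIntegral_le_integral hint (.of_forall hp)).trans htot
  have hbound := hsplit.trans (add_le_add (mul_le_mul_of_nonneg_left hlow (sq_nonneg t))
    (mul_le_mul_of_nonneg_left hhigh (by positivity)))
  rw [hb]
  calc _ ≤ 1 / (2 * Real.pi) * (t ^ 2 * (2 * Real.pi * M ^ 2 / Q) +
        16 / Egap ^ 2 * (2 * Real.pi * M ^ 2)) := by gcongr
    _ = M ^ 2 * (t ^ 2 / Q + 16 / Egap ^ 2) := by field_simp [Real.pi_ne_zero]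

/-- Let `b(t) = (1/2π) ∫ p(ω) [sin((ω+E)t/2)/((ω+E)/2)]² dω` with `p ≥ 0`,
`E ≥ E_gap > 0`, total mass `∫ p ≤ 2π M²` and tail
`∫_{|ω| ≥ E_gap/2} p ≤ 2π M²/Q` for some `Q > 0`.  Then
`b(t) ≤ M² (t²/Q + 16/E_gap²)`. -/
theorem stmt13 (p : ℝ → ℝ) (hp : ∀ ω, 0 ≤ p ω) (hint : Integrable p)
    (E Egap M Q : ℝ) (hgap : 0 < Egap) (hE : Egap ≤ E) (hQ : 0 < Q)
    (t : ℝ)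
    (hker : Integrable (fun ω =>
      p ω * (Real.sin ((ω + E) * t / 2) / ((ω + E) / 2)) ^ 2))
    (htot : ∫ ω, p ω ≤ 2 * Real.pi * M ^ 2)
    (htail : ∫ ω in {x : ℝ | Egap / 2 ≤ |x|}, p ω ≤ 2 * Real.pi * M ^ 2 / Q)
    (b : ℝ → ℝ)
    (hb : b t = (1 / (2 * Real.pi)) *
      ∫ ω, p ω * (Real.sin ((ω + E) * t / 2) / ((ω + E) / 2)) ^ 2) :
    b t ≤ M ^ 2 * (t ^ 2 / Q + 16 / Egap ^ 2) :=
  stmt13_general p hp hint E Egap M Q hgap hE t hker htot htail b hb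
end
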